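/- Canonical (term) model theorem: let T_m be a maximally consistent theory in a first-order language L that has the Henkin witness property. Then there exists an L-structure 𝔄 such that for every L-sentence α, 𝔄 ⊨ α if and only if T_m ⊢ α. -/

import Mathlib

open FirstOrder FirstOrder.Language

universe u v w

namespace NDFOL

variable {L : FirstOrder.Language.{u, v}}

/-- Instantiate the (single) bound variable of a bounded formula by a term,
yielding a formula. -/
def inst (ψ : L.BoundedFormula ℕ 1) (t : L.Term ℕ) : L.Formula ℕ :=
  ψ.toFormula.subst (Sum.elim Term.var fun _ => t)

/-- The natural deduction proof system for first-order logic, with the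
introduction and elimination rules for `¬`, `∧`, `∨`, `→`, `↔`, `∀`, `∃`,
reiteration (weakening), and the usual rules for equality. -/
inductive ND : Set (L.Formula ℕ) → L.Formula ℕ → Prop
  | hyp {Γ : Set (L.Formula ℕ)} {φ : L.Formula ℕ} : φ ∈ Γ → ND Γ φ
  /-- Reiteration: anything derivable remains derivable with more hypotheses. -/
  | reiterate {Γ Γ' : Set (L.Formula ℕ)} {φ : L.Formula ℕ} :
      Γ ⊆ Γ' → ND Γ φ → ND Γ' φ
  /-- Negation introduction (reductio ad absurdum). -/
  | notI {Γ : Set (L.Formula ℕ)} {φ : L.Formula ℕ} :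
      ND (insert φ Γ) ⊥ → ND Γ (∼φ)
  /-- Negation elimination (double negation elimination). -/
  | notE {Γ : Set (L.Formula ℕ)} {φ : L.Formula ℕ} :
      ND Γ (∼∼φ) → ND Γ φ
  /-- A contradiction yields falsum. -/
  | botI {Γ : Set (L.Formula ℕ)} {φ : L.Formula ℕ} :
      ND Γ φ → ND Γ (∼φ) → ND Γ ⊥
  | andI {Γ : Set (L.Formula ℕ)} {φ ψ : L.Formula ℕ} :
      ND Γ φ → ND Γ ψ → ND Γ (φ ⊓ ψ)
  | andE₁ {Γ : Set (L.Formula ℕ)} {φ ψ : L.Formula ℕ} :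
      ND Γ (φ ⊓ ψ) → ND Γ φ
  | andE₂ {Γ : Set (L.Formula ℕ)} {φ ψ : L.Formula ℕ} :
      ND Γ (φ ⊓ ψ) → ND Γ ψ
  | orI₁ {Γ : Set (L.Formula ℕ)} {φ ψ : L.Formula ℕ} :
      ND Γ φ → ND Γ (φ ⊔ ψ)
  | orI₂ {Γ : Set (L.Formula ℕ)} {φ ψ : L.Formula ℕ} :
      ND Γ ψ → ND Γ (φ ⊔ ψ)
  | orE {Γ : Set (L.Formula ℕ)} {φ ψ χ : L.Formula ℕ} :
      ND Γ (φ ⊔ ψ) → ND Γ (φ ⟹ χ) → ND Γ (ψ ⟹ χ) → ND Γ χ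
  | impI {Γ : Set (L.Formula ℕ)} {φ ψ : L.Formula ℕ} :
      ND (insert φ Γ) ψ → ND Γ (φ ⟹ ψ)
  /-- Modus ponens. -/
  | impE {Γ : Set (L.Formula ℕ)} {φ ψ : L.Formula ℕ} :
      ND Γ (φ ⟹ ψ) → ND Γ φ → ND Γ ψ
  | iffI {Γ : Set (L.Formula ℕ)} {φ ψ : L.Formula ℕ} :
      ND Γ (φ ⟹ ψ) → ND Γ (ψ ⟹ φ) → ND Γ (φ ⇔ ψ)
  | iffE₁ {Γ : Set (L.Formula ℕ)} {φ ψ : L.Formula ℕ} :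
      ND Γ (φ ⇔ ψ) → ND Γ (φ ⟹ ψ)
  | iffE₂ {Γ : Set (L.Formula ℕ)} {φ ψ : L.Formula ℕ} :
      ND Γ (φ ⇔ ψ) → ND Γ (ψ ⟹ φ)
  /-- Universal introduction: from `φ(x)` for a variable `x` that is not free
  in the hypotheses nor in `∀ φ`, conclude `∀ φ`. -/
  | allI {Γ : Set (L.Formula ℕ)} {ψ : L.BoundedFormula ℕ 1} {x : ℕ} :
      (∀ γ ∈ Γ, x ∉ γ.freeVarFinset) → x ∉ (∀'ψ).freeVarFinset →
      ND Γ (inst ψ (Term.var x)) → ND Γ (∀'ψ)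
  /-- Universal elimination (instantiation at any term `t`). -/
  | allE {Γ : Set (L.Formula ℕ)} {ψ : L.BoundedFormula ℕ 1} (t : L.Term ℕ) :
      ND Γ (∀'ψ) → ND Γ (inst ψ t)
  /-- Existential introduction. -/
  | exI {Γ : Set (L.Formula ℕ)} {ψ : L.BoundedFormula ℕ 1} (t : L.Term ℕ) :
      ND Γ (inst ψ t) → ND Γ (∃'ψ)
  /-- Existential elimination, with a fresh variable `x`. -/
  | exE {Γ : Set (L.Formula ℕ)} {χ : L.Formula ℕ} {ψ : L.BoundedFormula ℕ 1} {x : ℕ} :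
      (∀ γ ∈ Γ, x ∉ γ.freeVarFinset) → x ∉ (∃'ψ).freeVarFinset →
      x ∉ χ.freeVarFinset →
      ND Γ (∃'ψ) → ND (insert (inst ψ (Term.var x)) Γ) χ → ND Γ χ
  /-- Reflexivity of equality. -/
  | eqRefl {Γ : Set (L.Formula ℕ)} (t : L.Term ℕ) : ND Γ (Term.equal t t)
  /-- Substitution of provably equal terms. -/
  | eqSubst {Γ : Set (L.Formula ℕ)} {ψ : L.BoundedFormula ℕ 1} {t s : L.Term ℕ} :
      ND Γ (Term.equal t s) → ND Γ (inst ψ t) → ND Γ (inst ψ s)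

/-- A sentence, viewed as a formula with (no) free variables among `ℕ`. -/
def sentenceToFormula (φ : L.Sentence) : L.Formula ℕ :=
  φ.relabel (Empty.elim : Empty → ℕ)

/-- Derivability of a sentence from a set of sentences in the natural
deduction proof system. -/
def SDeriv (Γ : Set L.Sentence) (φ : L.Sentence) : Prop :=
  ND (sentenceToFormula '' Γ) (sentenceToFormula φ)

/-- Instantiate the (single) bound variable of a bounded formula (with no free
variables) by a closed term, yielding a sentence. -/
def instS (ψ : L.BoundedFormula Empty 1) (t : L.Term Empty) : L.Sentence :=
  ψ.toFormula.subst (Sum.elim Term.var fun _ => t)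

/-- A set of sentences is consistent if it does not derive `⊥`. -/
def Consistent (Γ : Set L.Sentence) : Prop :=
  ¬ SDeriv Γ ⊥

/-- A theory (in the sense of van Dalen) is a set of sentences closed under
derivability. -/
def IsTheory (T : Set L.Sentence) : Prop :=
  ∀ φ : L.Sentence, SDeriv T φ → φ ∈ T

/-- A maximally consistent theory: a consistent theory such that every theory
strictly containing it is inconsistent. -/
def MaximallyConsistent (T : Set L.Sentence) : Prop :=
  IsTheory T ∧ Consistent T ∧
    ∀ T' : Set L.Sentence, IsTheory T' → T ⊂ T' → ¬ Consistent T'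

end NDFOL

/-!
Henkin's term model: closed terms modulo provable equality, which is a congruence because equal
arguments can be exchanged one at a time by the substitution rule; a relation holds when its atomic
sentence is derivable. The truth lemma `𝔄 ⊨ φ ↔ T_m ⊢ φ` goes by recursion on the depth of `φ`:
`⊥` by consistency, `→` by negation-completeness of the maximally consistent `T_m`, and `∀` by the
Henkin witness of `∃x ¬χ`, which makes `∀x χ` derivable once all its closed instances are.
On the syntactic side, simultaneous substitution `substAll` lets the translation of sentences into
`ℕ`-formulas commute with instantiation and shows that translated sentences are closed, as the
eigenvariable conditions of the calculus require.
-/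

namespace FirstOrder.Language

variable {L : Language.{u, v}} {α β γ : Type*}

namespace Term

theorem subst_var (t : L.Term α) : t.subst var = t := by
  induction t with
  | var => rfl
  | func f ts ih => simp only [subst, ih]

theorem subst_relabel (g : α → β) (σ : β → L.Term γ) (t : L.Term α) :
    (t.relabel g).subst σ = t.subst (σ ∘ g) := by
  induction t with
  | var => rfl
  | func f ts ih => simp only [relabel, subst, ih]

theorem relabel_subst (f : α → L.Term β) (g : β → γ) (t : L.Term α) :
    (t.subst f).relabel g = t.subst (relabel g ∘ f) := by
  induction t with
  | var => rfl
  | func f ts ih => simp only [relabel, subst, ih]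

theorem subst_subst (f : α → L.Term β) (g : β → L.Term γ) (t : L.Term α) :
    (t.subst f).subst g = t.subst (fun a => (f a).subst g) := by
  induction t with
  | var => rfl
  | func f ts ih => simp only [subst, ih]

theorem relabel_eq_subst (g : α → β) (t : L.Term α) : t.relabel g = t.subst (var ∘ g) := by
  induction t with
  | var => rfl
  | func f ts ih => simp only [relabel, subst, ih]

theorem varFinsetLeft_relabel_sumMap [DecidableEq α] {k k' : ℕ} (h : Fin k → Fin k')
    (t : L.Term (α ⊕ Fin k)) : (t.relabel (Sum.map id h)).varFinsetLeft = t.varFinsetLeft := by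
  induction t with
  | var z => cases z <;> rfl
  | func f ts ih => simp only [relabel, varFinsetLeft, ih]

theorem varFinsetLeft_subst_eq_empty [DecidableEq β] {k : ℕ} {f : α → L.Term (β ⊕ Fin k)}
    (hf : ∀ a, (f a).varFinsetLeft = ∅) (t : L.Term α) : (t.subst f).varFinsetLeft = ∅ := by
  induction t with
  | var a => exact hf a
  | func F ts ih => ext; simp [subst, varFinsetLeft, ih]

end Term

namespace BoundedFormula

open Term

def liftSubst {n k : ℕ} (f : α ⊕ Fin n → L.Term (β ⊕ Fin k)) :
    α ⊕ Fin (n + 1) → L.Term (β ⊕ Fin (k + 1)) :=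
  Sum.elim (fun a => (f (Sum.inl a)).relabel (Sum.map id Fin.castSucc))
    (Fin.snoc (fun i => (f (Sum.inr i)).relabel (Sum.map id Fin.castSucc))
      (var (Sum.inr (Fin.last k))))

section liftSubst

variable {n k : ℕ} (f : α ⊕ Fin n → L.Term (β ⊕ Fin k))

@[simp]
theorem liftSubst_inl (a : α) :
    liftSubst f (Sum.inl a) = (f (Sum.inl a)).relabel (Sum.map id Fin.castSucc) := rfl

@[simp]
theorem liftSubst_castSucc (i : Fin n) :
    liftSubst f (Sum.inr i.castSucc) = (f (Sum.inr i)).relabel (Sum.map id Fin.castSucc) := by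
  simp [liftSubst]

@[simp]
theorem liftSubst_last : liftSubst f (Sum.inr (Fin.last n)) = var (Sum.inr (Fin.last k)) := by
  simp [liftSubst]

end liftSubst

/-- Simultaneous substitution for all variables, free and bound (`BoundedFormula.subst` only
replaces the free ones). -/
def substAll : ∀ {n k : ℕ}, L.BoundedFormula α n → (α ⊕ Fin n → L.Term (β ⊕ Fin k)) →
    L.BoundedFormula β k
  | _, _, falsum, _ => falsum
  | _, _, equal t₁ t₂, f => equal (t₁.subst f) (t₂.subst f)
  | _, _, rel R ts, f => rel R fun i => (ts i).subst f
  | _, _, imp φ ψ, f => (φ.substAll f).imp (ψ.substAll f)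
  | _, _, all φ, f => (φ.substAll (liftSubst f)).all

theorem liftSubst_var {n : ℕ} : liftSubst (var : α ⊕ Fin n → L.Term (α ⊕ Fin n)) = var := by
  funext x
  rcases x with a | i
  · rfl
  · induction i using Fin.lastCases <;> simp

@[simp]
theorem substAll_var : ∀ {n : ℕ} (φ : L.BoundedFormula α n), φ.substAll var = φ
  | _, falsum => rfl
  | _, equal t₁ t₂ => by simp [substAll, subst_var]
  | _, rel R ts => by simp [substAll, subst_var]
  | _, imp φ ψ => by simp [substAll, substAll_var φ, substAll_var ψ]
  | _, all φ => by rw [substAll, liftSubst_var, substAll_var φ]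

theorem liftSubst_subst {n k k' : ℕ} (f : α ⊕ Fin n → L.Term (β ⊕ Fin k))
    (g : β ⊕ Fin k → L.Term (γ ⊕ Fin k')) :
    (fun x => (liftSubst f x).subst (liftSubst g)) = liftSubst fun x => (f x).subst g := by
  have lift_subst (t : L.Term (β ⊕ Fin k)) :
      (t.relabel (Sum.map id Fin.castSucc)).subst (liftSubst g)
        = (t.subst g).relabel (Sum.map id Fin.castSucc) := by
    rw [subst_relabel, relabel_subst]
    congr 1
    funext y
    rcases y with b | j <;> simp
  funext x
  rcases x with a | i
  · exact lift_subst _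
  · induction i using Fin.lastCases
    · simp [Term.subst]
    · simpa using lift_subst _

theorem substAll_substAll : ∀ {n k k' : ℕ} (φ : L.BoundedFormula α n)
    (f : α ⊕ Fin n → L.Term (β ⊕ Fin k)) (g : β ⊕ Fin k → L.Term (γ ⊕ Fin k')),
    (φ.substAll f).substAll g = φ.substAll fun x => (f x).subst g
  | _, _, _, falsum, _, _ => rfl
  | _, _, _, equal t₁ t₂, f, g => by simp [substAll, subst_subst]
  | _, _, _, rel R ts, f, g => by simp [substAll, subst_subst]
  | _, _, _, imp φ ψ, f, g => by simp [substAll, substAll_substAll φ f g, substAll_substAll ψ f g]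
  | _, _, _, all φ, f, g => by
    rw [substAll, substAll, substAll, substAll_substAll φ, liftSubst_subst]

theorem subst_eq_substAll : ∀ {n : ℕ} (φ : L.BoundedFormula α n) (σ : α → L.Term β),
    φ.subst σ = φ.substAll (Sum.elim (Term.relabel Sum.inl ∘ σ) (var ∘ Sum.inr))
  | _, falsum, _ => rfl
  | _, equal _ _, _ => rfl
  | _, rel _ _, _ => rfl
  | _, imp φ ψ, σ => congrArg₂ imp (subst_eq_substAll φ σ) (subst_eq_substAll ψ σ)
  | _, all φ, σ => by
    refine congrArg all ((subst_eq_substAll φ σ).trans (congrArg _ (funext fun x => ?_)))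
    rcases x with a | i
    · simp only [Sum.elim_inl, Function.comp_apply, liftSubst_inl, Term.relabel_relabel]
      rfl
    · induction i using Fin.lastCases <;> simp [Term.relabel]

theorem relabel_substAll {p : ℕ} (q : α → β ⊕ Fin p) : ∀ {j k : ℕ} (φ : L.BoundedFormula α j)
    (g : β ⊕ Fin (p + j) → L.Term (γ ⊕ Fin k)),
    (φ.relabel q).substAll g = φ.substAll (g ∘ relabelAux q j)
  | _, _, falsum, _ => rfl
  | _, _, equal t₁ t₂, g => by
    simp [relabel, mapTermRel, substAll, subst_relabel]
  | _, _, rel R ts, g => by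
    simp [relabel, mapTermRel, substAll, subst_relabel]
  | _, _, imp φ ψ, g => by
    rw [relabel_imp, substAll, relabel_substAll q φ g, relabel_substAll q ψ g]; rfl
  | _, _, all φ, g => by
    rw [relabel_all, substAll, substAll, relabel_substAll q φ (liftSubst g)]
    refine congrArg all (congrArg _ (funext fun x => ?_))
    rcases x with a | i
    · rcases h : q a with b | m
      · simp [relabelAux, h]
      · simp only [relabelAux, Function.comp_apply, Sum.map_inl, h, Equiv.sumAssoc_apply_inl_inr,
          Sum.map_inr, finSumFinEquiv_apply_left, liftSubst_inl]
        exact liftSubst_castSucc g (Fin.castAdd _ m)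
    · induction i using Fin.lastCases with
      | last => simp [relabelAux]
      | cast i => simpa [relabelAux] using liftSubst_castSucc g (Fin.natAdd p i)

theorem toFormula_substAll : ∀ {n k : ℕ} (φ : L.BoundedFormula α n)
    (f : α ⊕ Fin n → L.Term (β ⊕ Fin k)),
    φ.toFormula.substAll (Sum.elim f finZeroElim) = φ.substAll f
  | _, _, falsum, _ => rfl
  | _, _, equal t₁ t₂, f => by
    simp [Term.equal, Term.bdEqual, substAll, subst_relabel]
  | _, _, rel R ts, f => by
    simp [Relations.formula, Relations.boundedFormula, substAll, subst_relabel]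
  | _, _, imp φ ψ, f => by
    simp only [toFormula, substAll, toFormula_substAll φ f, toFormula_substAll ψ f]
  | _, _, all φ, f => by
    rw [toFormula, substAll, substAll, relabel_substAll, ← toFormula_substAll φ (liftSubst f)]
    refine congrArg all (congrArg _ (funext fun x => ?_))
    rcases x with (a | i) | i
    · rfl
    · induction i using Fin.lastCases with
      | last =>
        simp only [relabelAux, Function.comp_apply, Sum.map_inl, Sum.elim_inr,
          finSumFinEquiv_symm_last, Sum.map_inr, id_eq, Equiv.sumAssoc_apply_inl_inr, Sum.elim_inl,
          liftSubst_last]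
        exact liftSubst_last _
      | cast i =>
        rw [show i.castSucc = Fin.castAdd 1 i from rfl]
        simp only [Function.comp_apply, relabelAux, Sum.elim_inl, Sum.elim_inr,
          finSumFinEquiv_symm_apply_castAdd, Sum.map_inl]
        exact (liftSubst_castSucc f i).symm
    · exact i.elim0

theorem toFormula_subst_eq_substAll {n : ℕ} (φ : L.BoundedFormula α n)
    (σ : α ⊕ Fin n → L.Term β) : φ.toFormula.subst σ = φ.substAll (Term.relabel Sum.inl ∘ σ) := by
  rw [subst_eq_substAll, ← toFormula_substAll φ]
  refine congrArg _ (funext fun x => ?_)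
  rcases x with y | i
  · rfl
  · exact i.elim0

theorem varFinsetLeft_liftSubst [DecidableEq β] {n k : ℕ} {f : α ⊕ Fin n → L.Term (β ⊕ Fin k)}
    (hf : ∀ z, (f z).varFinsetLeft = ∅) (z : α ⊕ Fin (n + 1)) :
    (liftSubst f z).varFinsetLeft = ∅ := by
  rcases z with a | i
  · simpa [varFinsetLeft_relabel_sumMap] using hf (Sum.inl a)
  · induction i using Fin.lastCases with
    | last => simp [varFinsetLeft]
    | cast i => simpa [varFinsetLeft_relabel_sumMap] using hf (Sum.inr i)

theorem freeVarFinset_substAll_eq_empty [DecidableEq β] : ∀ {n k : ℕ}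
    (φ : L.BoundedFormula α n) {f : α ⊕ Fin n → L.Term (β ⊕ Fin k)},
    (∀ z, (f z).varFinsetLeft = ∅) → (φ.substAll f).freeVarFinset = ∅
  | _, _, falsum, _, _ => rfl
  | _, _, equal t₁ t₂, _, hf => by
    simp [substAll, freeVarFinset, varFinsetLeft_subst_eq_empty hf]
  | _, _, rel R ts, _, hf => by
    ext; simp [substAll, freeVarFinset, varFinsetLeft_subst_eq_empty hf]
  | _, _, imp φ ψ, _, hf => by
    simp [substAll, freeVarFinset, freeVarFinset_substAll_eq_empty φ hf,
      freeVarFinset_substAll_eq_empty ψ hf]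
  | _, _, all φ, _, hf => freeVarFinset_substAll_eq_empty φ (varFinsetLeft_liftSubst hf)

def depth : ∀ {n : ℕ}, L.BoundedFormula α n → ℕ
  | _, falsum => 0
  | _, equal _ _ => 0
  | _, rel _ _ => 0
  | _, imp φ ψ => max φ.depth ψ.depth + 1
  | _, all φ => φ.depth + 1

@[simp]
theorem depth_substAll : ∀ {n k : ℕ} (φ : L.BoundedFormula α n)
    (f : α ⊕ Fin n → L.Term (β ⊕ Fin k)), (φ.substAll f).depth = φ.depth
  | _, _, falsum, _ => rfl
  | _, _, equal _ _, _ => rfl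
  | _, _, rel _ _, _ => rfl
  | _, _, imp φ ψ, f => by simp [substAll, depth, depth_substAll φ, depth_substAll ψ]
  | _, _, all φ, f => by simp [substAll, depth, depth_substAll φ]

end BoundedFormula

end FirstOrder.Language

namespace NDFOL

open BoundedFormula

variable {L : FirstOrder.Language.{u, v}} {T : Set L.Sentence}

def relabelToNat (χ : L.BoundedFormula Empty 1) : L.BoundedFormula ℕ 1 :=
  χ.relabel (Sum.inl ∘ Empty.elim)

theorem sentenceToFormula_eq_substAll (φ : L.Sentence) (f : Empty ⊕ Fin 0 → L.Term (ℕ ⊕ Fin 0)) :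
    sentenceToFormula φ = φ.substAll f := by
  rw [sentenceToFormula, Formula.relabel, ← substAll_var (BoundedFormula.relabel _ φ),
    relabel_substAll]
  exact congrArg _ (Subsingleton.elim _ _)

theorem freeVarFinset_sentenceToFormula (φ : L.Sentence) :
    (sentenceToFormula φ).freeVarFinset = ∅ := by
  rw [sentenceToFormula_eq_substAll φ isEmptyElim]
  exact freeVarFinset_substAll_eq_empty φ isEmptyElim

theorem sentenceToFormula_all (χ : L.BoundedFormula Empty 1) :
    sentenceToFormula (∀'χ) = ∀'(relabelToNat χ) := by
  simp [sentenceToFormula, Formula.relabel, relabelToNat]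

theorem sentenceToFormula_equal (t s : L.Term Empty) :
    sentenceToFormula (Term.equal t s)
      = Term.equal (t.relabel Empty.elim) (s.relabel Empty.elim) := by
  simp only [sentenceToFormula, Formula.relabel, Term.equal, Term.bdEqual, relabel, mapTermRel,
    Term.relabel_relabel]
  congr 2

theorem instS_eq_substAll (χ : L.BoundedFormula Empty 1) (t : L.Term Empty) :
    instS χ t = χ.substAll (Term.relabel Sum.inl ∘ Sum.elim Term.var fun _ => t) :=
  toFormula_subst_eq_substAll χ _

theorem inst_eq_substAll (ψ : L.BoundedFormula ℕ 1) (t : L.Term ℕ) :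
    inst ψ t = ψ.substAll (Term.relabel Sum.inl ∘ Sum.elim Term.var fun _ => t) :=
  toFormula_subst_eq_substAll ψ _

theorem sentenceToFormula_instS (χ : L.BoundedFormula Empty 1) (t : L.Term Empty) :
    sentenceToFormula (instS χ t) = inst (relabelToNat χ) (t.relabel Empty.elim) := by
  rw [sentenceToFormula_eq_substAll _ isEmptyElim, instS_eq_substAll, substAll_substAll,
    inst_eq_substAll, relabelToNat, relabel_substAll]
  refine congrArg _ (funext fun x => ?_)
  rcases x with e | i
  · exact e.elim
  · simp only [Function.comp_apply, Sum.elim_inr, Term.relabel_eq_subst, Term.subst_subst,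
      Term.subst, relabelAux, Sum.map_inr, id_eq, Equiv.sumAssoc_apply_inr]
    exact congrArg _ (Subsingleton.elim _ _)

theorem depth_instS (χ : L.BoundedFormula Empty 1) (t : L.Term Empty) :
    (instS χ t).depth = χ.depth := by
  rw [instS_eq_substAll, depth_substAll]

namespace ND

theorem exfalso {Γ : Set (L.Formula ℕ)} {φ : L.Formula ℕ} (h : ND Γ ⊥) : ND Γ φ :=
  notE (notI (reiterate (Set.subset_insert _ _) h))

/-- The replacing context `Γ'` must be closed, so that it cannot break the eigenvariable
conditions of `allI` and `exE`. -/
theorem cut {Δ Γ' : Set (L.Formula ℕ)} (hΔ : ∀ δ ∈ Δ, ND Γ' δ)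
    (hΓ' : ∀ γ ∈ Γ', γ.freeVarFinset = ∅) {Γ : Set (L.Formula ℕ)} {φ : L.Formula ℕ}
    (h : ND Γ φ) : ND ((Γ \ Δ) ∪ Γ') φ := by
  have insert_sub (ψ : L.Formula ℕ) (Γ : Set (L.Formula ℕ)) :
      (insert ψ Γ \ Δ) ∪ Γ' ⊆ insert ψ ((Γ \ Δ) ∪ Γ') := by
    rintro x (⟨rfl | hx, hxΔ⟩ | hx)
    · exact Set.mem_insert _ _
    · exact Set.mem_insert_of_mem _ (Or.inl ⟨hx, hxΔ⟩)
    · exact Set.mem_insert_of_mem _ (Or.inr hx)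
  have fresh {Γ : Set (L.Formula ℕ)} {x : ℕ} (hx : ∀ γ ∈ Γ, x ∉ γ.freeVarFinset) :
      ∀ γ ∈ (Γ \ Δ) ∪ Γ', x ∉ γ.freeVarFinset := by
    rintro γ (⟨hγ, -⟩ | hγ)
    · exact hx γ hγ
    · simp [hΓ' γ hγ]
  induction h with
  | @hyp Γ φ hφ =>
    by_cases hφΔ : φ ∈ Δ
    · exact reiterate Set.subset_union_right (hΔ φ hφΔ)
    · exact hyp (Or.inl ⟨hφ, hφΔ⟩)
  | reiterate hsub _ ih =>
    exact reiterate (Set.union_subset_union_left _ (Set.sdiff_subset_sdiff_left hsub)) ih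
  | notI _ ih => exact notI (reiterate (insert_sub _ _) ih)
  | notE _ ih => exact notE ih
  | botI _ _ ih₁ ih₂ => exact botI ih₁ ih₂
  | andI _ _ ih₁ ih₂ => exact andI ih₁ ih₂
  | andE₁ _ ih => exact andE₁ ih
  | andE₂ _ ih => exact andE₂ ih
  | orI₁ _ ih => exact orI₁ ih
  | orI₂ _ ih => exact orI₂ ih
  | orE _ _ _ ih₁ ih₂ ih₃ => exact orE ih₁ ih₂ ih₃
  | impI _ ih => exact impI (reiterate (insert_sub _ _) ih)
  | impE _ _ ih₁ ih₂ => exact impE ih₁ ih₂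
  | iffI _ _ ih₁ ih₂ => exact iffI ih₁ ih₂
  | iffE₁ _ ih => exact iffE₁ ih
  | iffE₂ _ ih => exact iffE₂ ih
  | allI hx hψ _ ih => exact allI (fresh hx) hψ ih
  | allE t _ ih => exact allE t ih
  | exI t _ ih => exact exI t ih
  | exE hx hψ hχ _ _ ih₁ ih₂ => exact exE (fresh hx) hψ hχ ih₁ (reiterate (insert_sub _ _) ih₂)
  | eqRefl t => exact eqRefl t
  | eqSubst _ _ ih₁ ih₂ => exact eqSubst ih₁ ih₂

end ND

namespace SDeriv

variable {φ ψ : L.Sentence}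

theorem of_mem (h : φ ∈ T) : SDeriv T φ :=
  ND.hyp ⟨φ, h, rfl⟩

theorem trans {T' : Set L.Sentence} (hT' : ∀ ψ ∈ T', SDeriv T ψ) (h : SDeriv T' φ) :
    SDeriv T φ := by
  have hcut := ND.cut (Δ := sentenceToFormula '' T') (Γ' := sentenceToFormula '' T)
    (by rintro _ ⟨ψ, hψ, rfl⟩; exact hT' ψ hψ)
    (by rintro _ ⟨ψ, -, rfl⟩; exact freeVarFinset_sentenceToFormula ψ) h
  rwa [Set.sdiff_self, Set.empty_union] at hcut

theorem mono {T' : Set L.Sentence} (hTT' : T ⊆ T') (h : SDeriv T φ) : SDeriv T' φ :=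
  ND.reiterate (Set.image_mono hTT') h

theorem mp (h : SDeriv T (φ.imp ψ)) (hφ : SDeriv T φ) : SDeriv T ψ :=
  ND.impE h hφ

theorem imp_of_right (h : SDeriv T ψ) : SDeriv T (φ.imp ψ) :=
  ND.impI (ND.reiterate (Set.subset_insert _ _) h)

theorem imp_of_not_left (h : SDeriv T (∼φ)) : SDeriv T (φ.imp ψ) :=
  ND.impI (ND.exfalso (ND.botI (ND.hyp (Set.mem_insert _ _))
    (ND.reiterate (Set.subset_insert _ _) h)))

theorem not_of_insert_bot (h : SDeriv (insert φ T) ⊥) : SDeriv T (∼φ) := by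
  unfold SDeriv at h
  rw [Set.image_insert_eq] at h
  exact ND.notI h

theorem bot_of_not (h : SDeriv T φ) (h' : SDeriv T (∼φ)) : SDeriv T ⊥ :=
  ND.botI h h'

theorem of_not_not (h : SDeriv T (∼∼φ)) : SDeriv T φ :=
  ND.notE h

theorem instS_of_all {χ : L.BoundedFormula Empty 1} (h : SDeriv T (∀'χ)) (t : L.Term Empty) :
    SDeriv T (instS χ t) := by
  unfold SDeriv at h ⊢
  rw [sentenceToFormula_all] at h
  rw [sentenceToFormula_instS]
  exact ND.allE _ h

theorem all_of_all_not_not {χ : L.BoundedFormula Empty 1} (h : SDeriv T (∀'∼∼χ)) :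
    SDeriv T (∀'χ) := by
  unfold SDeriv at h ⊢
  rw [sentenceToFormula_all] at h ⊢
  have closed {γ : L.Formula ℕ} (hγ : γ.freeVarFinset = ∅) : 0 ∉ γ.freeVarFinset := by simp [hγ]
  refine ND.allI (x := 0) ?_ ?_ (ND.notE (ND.allE (Term.var 0) h))
  · rintro _ ⟨ψ, -, rfl⟩
    exact closed (freeVarFinset_sentenceToFormula ψ)
  · exact closed (sentenceToFormula_all χ ▸ freeVarFinset_sentenceToFormula (∀'χ))

theorem eqRefl (t : L.Term Empty) : SDeriv T (Term.equal t t) := by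
  unfold SDeriv
  rw [sentenceToFormula_equal]
  exact ND.eqRefl _

theorem eqSubst {t s : L.Term Empty} {χ : L.BoundedFormula Empty 1}
    (he : SDeriv T (Term.equal t s)) (h : SDeriv T (instS χ t)) : SDeriv T (instS χ s) := by
  unfold SDeriv at he h ⊢
  rw [sentenceToFormula_equal] at he
  rw [sentenceToFormula_instS] at h ⊢
  exact ND.eqSubst he h

end SDeriv

def HasHenkinWitnesses (T : Set L.Sentence) : Prop :=
  ∀ φ : L.BoundedFormula Empty 1, ∃ c : L.Constants, ((∃'φ) ⟹ instS φ c.term) ∈ T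

theorem HasHenkinWitnesses.sderiv_all_iff (hT : HasHenkinWitnesses T)
    {χ : L.BoundedFormula Empty 1} : SDeriv T (∀'χ) ↔ ∀ t, SDeriv T (instS χ t) := by
  refine ⟨SDeriv.instS_of_all, fun h => ?_⟩
  obtain ⟨c, hc⟩ := hT (∼χ)
  have not_ex : SDeriv T (∼(∃'∼χ)) := by
    refine SDeriv.not_of_insert_bot (SDeriv.bot_of_not (φ := instS χ c.term) ?_ ?_)
    · exact SDeriv.mono (Set.subset_insert _ _) (h c.term)
    · exact SDeriv.mp (SDeriv.of_mem (Set.mem_insert_of_mem _ hc))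
        (SDeriv.of_mem (Set.mem_insert _ _))
  exact SDeriv.all_of_all_not_not (SDeriv.of_not_not not_ex)

namespace MaximallyConsistent

theorem sderiv_or_sderiv_not (hT : MaximallyConsistent T) (φ : L.Sentence) :
    SDeriv T φ ∨ SDeriv T (∼φ) := by
  refine or_iff_not_imp_left.2 fun hφ => SDeriv.not_of_insert_bot ?_
  let T' : Set L.Sentence := {ψ | SDeriv (insert φ T) ψ}
  have isTheory : IsTheory T' := fun ψ hψ => SDeriv.trans (fun _ h => h) hψ
  have lt : T ⊂ T' := by
    refine ⟨fun ψ hψ => SDeriv.of_mem (Set.mem_insert_of_mem _ hψ), fun hT'T => hφ ?_⟩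
    exact SDeriv.of_mem (hT'T (SDeriv.of_mem (Set.mem_insert φ T)))
  exact SDeriv.trans (fun _ h => h) (not_not.1 (hT.2.2 T' isTheory lt))

theorem sderiv_imp_iff (hT : MaximallyConsistent T) {φ ψ : L.Sentence} :
    SDeriv T (φ.imp ψ) ↔ (SDeriv T φ → SDeriv T ψ) :=
  ⟨SDeriv.mp, fun h => (hT.sderiv_or_sderiv_not φ).elim (fun hφ => SDeriv.imp_of_right (h hφ))
    SDeriv.imp_of_not_left⟩

end MaximallyConsistent

theorem instS_equal (t₁ t₂ : L.Term (Empty ⊕ Fin 1)) (s : L.Term Empty) :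
    instS (equal t₁ t₂) s = Term.equal (t₁.subst (Sum.elim Term.var fun _ => s))
      (t₂.subst (Sum.elim Term.var fun _ => s)) := by
  simp only [instS_eq_substAll, substAll, Term.equal, Term.bdEqual, Term.relabel_subst]

theorem instS_rel {m : ℕ} (R : L.Relations m) (ts : Fin m → L.Term (Empty ⊕ Fin 1))
    (s : L.Term Empty) :
    instS (rel R ts) s = R.formula fun i => (ts i).subst (Sum.elim Term.var fun _ => s) := by
  simp only [instS_eq_substAll, substAll, Relations.formula, Relations.boundedFormula,
    Term.relabel_subst]

theorem subst_relabel_inl (t s : L.Term Empty) :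
    (t.relabel Sum.inl : L.Term (Empty ⊕ Fin 1)).subst (Sum.elim Term.var fun _ => s) = t := by
  rw [Term.subst_relabel]
  exact Term.subst_var t

def hole {m : ℕ} (w : Fin m → L.Term Empty) (j : Fin m) : Fin m → L.Term (Empty ⊕ Fin 1) :=
  Function.update (fun i => (w i).relabel Sum.inl) j (Term.var (Sum.inr 0))

theorem subst_hole {m : ℕ} (w : Fin m → L.Term Empty) (j : Fin m) (s : L.Term Empty) :
    (fun i => (hole w j i).subst (Sum.elim Term.var fun _ => s)) = Function.update w j s := by
  funext i
  rcases eq_or_ne i j with rfl | hij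
  · simp [hole]
  · simp [hole, hij, subst_relabel_inl]

theorem SDeriv.congr {m : ℕ} {P : (Fin m → L.Term Empty) → L.Sentence}
    (hP : ∀ w j, ∃ χ : L.BoundedFormula Empty 1, ∀ s, instS χ s = P (Function.update w j s))
    {us ws : Fin m → L.Term Empty} (h : ∀ i, SDeriv T (Term.equal (us i) (ws i)))
    (hus : SDeriv T (P us)) : SDeriv T (P ws) := by
  classical
  suffices ∀ s : Finset (Fin m), SDeriv T (P (s.piecewise ws us)) by
    simpa using this Finset.univ
  intro s
  induction s using Finset.induction_on with
  | empty => simpa using hus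
  | insert j s hj ih =>
    obtain ⟨χ, hχ⟩ := hP (s.piecewise ws us) j
    rw [Finset.piecewise_insert, ← hχ]
    refine SDeriv.eqSubst (h j) ?_
    rwa [hχ, Function.update_eq_self_iff.2 (Finset.piecewise_eq_of_notMem _ _ _ hj).symm]

theorem SDeriv.equal_symm {t s : L.Term Empty} (h : SDeriv T (Term.equal t s)) :
    SDeriv T (Term.equal s t) := by
  have key (r : L.Term Empty) :
      instS (equal (Term.var (Sum.inr 0)) (t.relabel Sum.inl)) r = Term.equal r t := by
    rw [instS_equal, subst_relabel_inl]
    rfl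
  rw [← key]
  exact SDeriv.eqSubst h (by rw [key]; exact SDeriv.eqRefl t)

theorem SDeriv.equal_trans {t s r : L.Term Empty} (h₁ : SDeriv T (Term.equal t s))
    (h₂ : SDeriv T (Term.equal s r)) : SDeriv T (Term.equal t r) := by
  have key (r : L.Term Empty) :
      instS (equal (t.relabel Sum.inl) (Term.var (Sum.inr 0))) r = Term.equal t r := by
    rw [instS_equal, subst_relabel_inl]
    rfl
  rw [← key]
  exact SDeriv.eqSubst h₂ (by rw [key]; exact h₁)

theorem SDeriv.func_congr {m : ℕ} (f : L.Functions m) {us ws : Fin m → L.Term Empty}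
    (h : ∀ i, SDeriv T (Term.equal (us i) (ws i))) :
    SDeriv T (Term.equal (Term.func f us) (Term.func f ws)) := by
  refine SDeriv.congr (P := fun w => Term.equal (Term.func f us) (Term.func f w))
    (fun w j => ⟨equal ((Term.func f us).relabel Sum.inl) (Term.func f (hole w j)), fun s => ?_⟩)
    h (SDeriv.eqRefl _)
  rw [instS_equal, subst_relabel_inl, Term.subst, subst_hole]

theorem SDeriv.rel_congr {m : ℕ} (R : L.Relations m) {us ws : Fin m → L.Term Empty}
    (h : ∀ i, SDeriv T (Term.equal (us i) (ws i))) (hus : SDeriv T (R.formula us)) :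
    SDeriv T (R.formula ws) :=
  SDeriv.congr (fun w j => ⟨rel R (hole w j), fun s => by rw [instS_rel, subst_hole]⟩) h hus

theorem realize_instS {M : Type*} [L.Structure M] (χ : L.BoundedFormula Empty 1)
    (t : L.Term Empty) :
    M ⊨ instS χ t ↔ χ.Realize default (Fin.snoc default (t.realize (default : Empty → M))) := by
  rw [Sentence.Realize, instS, Formula.Realize, realize_subst]
  refine (realize_toFormula χ _).trans
    (iff_of_eq (congrArg₂ _ (Subsingleton.elim _ _) (funext fun i => ?_)))
  rw [Fin.fin_one_eq_zero i]
  rfl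

theorem relabel_inl_relabel_isEmptyElim (t : L.Term (Empty ⊕ Fin 0)) :
    ((t.relabel isEmptyElim : L.Term Empty).relabel Sum.inl : L.Term (Empty ⊕ Fin 0)) = t := by
  rw [Term.relabel_relabel, Subsingleton.elim (Sum.inl ∘ isEmptyElim) id, Term.relabel_id]

def provableEq (T : Set L.Sentence) : Setoid (L.Term Empty) where
  r t s := SDeriv T (Term.equal t s)
  iseqv := ⟨SDeriv.eqRefl, SDeriv.equal_symm, SDeriv.equal_trans⟩

/-- Lifted because the model is asked for in universe `max u v`. -/
def TermModel (T : Set L.Sentence) : Type (max u v) :=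
  ULift.{v} (Quotient (provableEq T))

namespace TermModel

def mk (t : L.Term Empty) : TermModel T :=
  ULift.up (Quotient.mk _ t)

noncomputable def out (x : TermModel T) : L.Term Empty :=
  x.down.out

theorem mk_out (x : TermModel T) : mk x.out = x :=
  congrArg ULift.up (Quotient.out_eq _)

theorem mk_surjective : Function.Surjective (mk : L.Term Empty → TermModel T) :=
  fun x => ⟨x.out, mk_out x⟩

theorem mk_eq_mk {t s : L.Term Empty} :
    (mk t : TermModel T) = mk s ↔ SDeriv T (Term.equal t s) :=
  ULift.up_inj.trans Quotient.eq

theorem out_mk (t : L.Term Empty) : SDeriv T (Term.equal (mk t : TermModel T).out t) :=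
  mk_eq_mk.1 (mk_out _)

noncomputable instance : L.Structure (TermModel T) where
  funMap f xs := mk (Term.func f fun i => (xs i).out)
  RelMap R xs := SDeriv T (R.formula fun i => (xs i).out)

theorem realize_term (v : Empty → TermModel T) (t : L.Term Empty) : t.realize v = mk t := by
  induction t with
  | var e => exact e.elim
  | func f ts ih =>
    refine mk_eq_mk.2 (SDeriv.func_congr f fun i => ?_)
    simpa only [ih i] using out_mk (ts i)

theorem realize_equal_iff (t s : L.Term Empty) :
    TermModel T ⊨ Term.equal t s ↔ SDeriv T (Term.equal t s) := by
  simp only [Sentence.Realize, Formula.realize_equal, realize_term, mk_eq_mk]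

theorem realize_formula_iff {m : ℕ} (R : L.Relations m) (ts : Fin m → L.Term Empty) :
    TermModel T ⊨ R.formula ts ↔ SDeriv T (R.formula ts) := by
  simp only [Sentence.Realize, Formula.realize_rel, realize_term]
  exact ⟨SDeriv.rel_congr R fun i => out_mk (ts i),
    SDeriv.rel_congr R fun i => SDeriv.equal_symm (out_mk (ts i))⟩

/-- Recursion on depth: the case `∀'χ` needs the statement for every instance `instS χ t`,
which is not a subformula. -/
theorem realize_iff_sderiv (hT : MaximallyConsistent T) (hH : HasHenkinWitnesses T) :
    ∀ φ : L.Sentence, TermModel T ⊨ φ ↔ SDeriv T φ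
  | falsum => ⟨False.elim, fun h => (hT.2.1 h).elim⟩
  | equal t₁ t₂ => by
    simpa only [Term.equal, Term.bdEqual, relabel_inl_relabel_isEmptyElim] using
      realize_equal_iff (T := T) (t₁.relabel isEmptyElim) (t₂.relabel isEmptyElim)
  | rel R ts => by
    simpa only [Relations.formula, Relations.boundedFormula, relabel_inl_relabel_isEmptyElim] using
      realize_formula_iff (T := T) R fun i => (ts i).relabel isEmptyElim
  | imp φ ψ => by
    rw [Sentence.realize_imp, realize_iff_sderiv hT hH φ, realize_iff_sderiv hT hH ψ,
      hT.sderiv_imp_iff]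
  | all χ => by
    rw [hH.sderiv_all_iff, ← forall_congr' fun t => realize_iff_sderiv hT hH (instS χ t)]
    simp only [realize_instS, realize_term]
    exact mk_surjective.forall
termination_by φ => φ.depth
decreasing_by all_goals simp only [depth, depth_instS]; omega

end TermModel

/-- **Canonical (term) model theorem.** Let `T_m` be a maximally consistent
theory with the Henkin witness property.  Then there is an `L`-structure `𝔄`
such that for every sentence `α`, `𝔄 ⊨ α` if and only if `T_m ⊢ α`. -/
theorem canonical_model {L : FirstOrder.Language.{u, v}}
    (Tm : Set L.Sentence) (hmax : MaximallyConsistent Tm)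
    (hHenkin : ∀ φ : L.BoundedFormula Empty 1,
      ∃ c : L.Constants, ((∃'φ) ⟹ instS φ c.term) ∈ Tm) :
    ∃ (A : Type (max u v)) (S : L.Structure A), Nonempty A ∧
      ∀ α : L.Sentence, @FirstOrder.Language.Sentence.Realize L A S α ↔ SDeriv Tm α := by
  obtain ⟨c, -⟩ := hHenkin ⊥
  exact ⟨TermModel Tm, inferInstance, ⟨TermModel.mk c.term⟩,
    TermModel.realize_iff_sderiv hmax hHenkin⟩

end NDFOL
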